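/- arXiv:1009.3137 — 2 statements merged into one kernel-verified Lean document; each statement's English description precedes it below -/
import Mathlib

section
/- Let t₁, t₂, t₃, t₄ ∈ ℂ \ {0,1} with t₁t₂t₃t₄ = 1, set u₁ = t₁'t₄'', u₂ = t₁'t₂'', u₃ = t₃'t₂'', u₄ = t₃'t₄'', u₅ = 1/(u₁u₃) (where x' = 1/(1-x), x'' = 1-1/x), and assume u₁,...,u₅ ∉ {0,1}. Then the inverse relations hold: t₁ = u₁''u₂''u₅', t₂ = u₂'u₃'u₅'', t₃ = u₃''u₄''u₅', t₄ = u₄'u₁'u₅''. -/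
/-!
Write x' = 1/(1-x) and x'' = 1 - 1/x. For u = z'w'' one has u'' = (1-zw)/(1-w) and
u' = (1-z)w/(1-zw), while u₅ = 1/(u₁u₃) has u₅'' = 1 - u₁u₃ and u₅' = u₁u₃/(u₁u₃-1).
Everything then hinges on the factorisation
1 - u₁u₃ = (1-t₁t₂)(1-t₂t₃)/((1-t₁)(1-t₃)t₂), which holds because t₁t₂t₃t₄ = 1; with it the
relations for t₁ and t₂ are identities of rational functions. The cyclic shift
(t₁,t₂,t₃,t₄) ↦ (t₃,t₄,t₁,t₂) swaps u₁ ↔ u₃ and u₂ ↔ u₄ and fixes u₅, and turns these two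
relations into those for t₃ and t₄.
-/

section

variable {K : Type*} [Field K]

def shapePrime (z : K) : K := 1 / (1 - z)

def shapePrimePrime (z : K) : K := 1 - 1 / z

theorem shapePrime_one_div {x : K} (hx : x ≠ 0) : shapePrime (1 / x) = x / (x - 1) := by
  rw [shapePrime, one_sub_div hx, one_div_div]

theorem shapePrimePrime_one_div (x : K) : shapePrimePrime (1 / x) = 1 - x := by
  rw [shapePrimePrime, one_div_one_div]

theorem shapePrime_mul_shapePrimePrime {w : K} (z : K) (hw : w ≠ 0) :
    shapePrime z * shapePrimePrime w = (w - 1) / ((1 - z) * w) := by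
  rw [shapePrime, shapePrimePrime, one_sub_div hw, div_mul_div_comm, one_mul]

theorem shapePrime_mul_shapePrimePrime_ne_zero {z w : K} (hz : z ≠ 1) (hw0 : w ≠ 0)
    (hw1 : w ≠ 1) : shapePrime z * shapePrimePrime w ≠ 0 := by
  rw [shapePrime_mul_shapePrimePrime z hw0]
  exact div_ne_zero (sub_ne_zero.2 hw1) (mul_ne_zero (sub_ne_zero.2 hz.symm) hw0)

theorem shapePrimePrime_shapePrime_mul (z : K) {w : K} (hw0 : w ≠ 0) (hw1 : w ≠ 1) :
    shapePrimePrime (shapePrime z * shapePrimePrime w) = (1 - z * w) / (1 - w) := by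
  have : 1 - w ≠ 0 := sub_ne_zero.2 hw1.symm
  rw [shapePrime_mul_shapePrimePrime z hw0, shapePrimePrime, one_div_div]
  field_simp; ring

theorem shapePrime_shapePrime_mul {z w : K} (hz : z ≠ 1) (hw : w ≠ 0) :
    shapePrime (shapePrime z * shapePrimePrime w) = (1 - z) * w / (1 - z * w) := by
  have : 1 - z ≠ 0 := sub_ne_zero.2 hz.symm
  have h : 1 - shapePrime z * shapePrimePrime w = (1 - z * w) / ((1 - z) * w) := by
    rw [shapePrime_mul_shapePrimePrime z hw]; field_simp; ring
  rw [shapePrime, h, one_div_div]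

theorem shapePrime_inv_mul_shapePrimePrime {w : K} (hw0 : w ≠ 0) (hw1 : w ≠ 1) :
    shapePrime w⁻¹ * shapePrimePrime w = 1 := by
  rw [shapePrime, shapePrimePrime, one_div, ← one_div]
  have : 1 - 1 / w ≠ 0 := by
    rw [one_sub_div hw0]; exact div_ne_zero (sub_ne_zero.2 hw1) hw0
  field_simp

theorem mul_ne_one_of_shapePrime_mul_shapePrimePrime_ne_one {z w : K} (hw0 : w ≠ 0) (hw1 : w ≠ 1)
    (h : shapePrime z * shapePrimePrime w ≠ 1) : z * w ≠ 1 := by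
  rintro hzw
  rw [eq_inv_of_mul_eq_one_left hzw, shapePrime_inv_mul_shapePrimePrime hw0 hw1] at h
  exact h rfl

theorem one_sub_shape_mul_shape {t₁ t₂ t₃ t₄ : K} (hprod : t₁ * t₂ * t₃ * t₄ = 1)
    (h₁ : t₁ ≠ 1) (h₂ : t₂ ≠ 0) (h₃ : t₃ ≠ 1) (h₄ : t₄ ≠ 0) :
    1 - shapePrime t₁ * shapePrimePrime t₄ * (shapePrime t₃ * shapePrimePrime t₂) =
      (1 - t₁ * t₂) * (1 - t₂ * t₃) / ((1 - t₁) * (1 - t₃) * t₂) := by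
  have : 1 - t₁ ≠ 0 := sub_ne_zero.2 h₁.symm
  have : 1 - t₃ ≠ 0 := sub_ne_zero.2 h₃.symm
  rw [shapePrime_mul_shapePrimePrime t₁ h₄, shapePrime_mul_shapePrimePrime t₃ h₂]
  field_simp
  linear_combination (1 - t₂) * hprod

theorem four_five_inverse_t₁ {t₁ t₂ t₃ t₄ u₁ u₂ u₃ : K} (hprod : t₁ * t₂ * t₃ * t₄ = 1)
    (h₁ : t₁ ≠ 1) (h₂0 : t₂ ≠ 0) (h₂1 : t₂ ≠ 1) (h₃ : t₃ ≠ 1) (h₄0 : t₄ ≠ 0) (h₄1 : t₄ ≠ 1)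
    (hu₁ : u₁ = shapePrime t₁ * shapePrimePrime t₄) (hu₂ : u₂ = shapePrime t₁ * shapePrimePrime t₂)
    (hu₃ : u₃ = shapePrime t₃ * shapePrimePrime t₂) (hu₁1 : u₁ ≠ 1) (hu₂1 : u₂ ≠ 1) :
    t₁ = shapePrimePrime u₁ * shapePrimePrime u₂ * shapePrime (1 / (u₁ * u₃)) := by
  have h₁₄ := mul_ne_one_of_shapePrime_mul_shapePrimePrime_ne_one h₄0 h₄1 (hu₁ ▸ hu₁1)
  have h₁₂ := mul_ne_one_of_shapePrime_mul_shapePrimePrime_ne_one h₂0 h₂1 (hu₂ ▸ hu₂1)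
  have h₂₃ : t₂ * t₃ ≠ 1 := fun h ↦ h₁₄ (by linear_combination hprod - t₁ * t₄ * h)
  have : 1 - t₁ ≠ 0 := sub_ne_zero.2 h₁.symm
  have : 1 - t₃ ≠ 0 := sub_ne_zero.2 h₃.symm
  have : 1 - t₂ ≠ 0 := sub_ne_zero.2 h₂1.symm
  have : 1 - t₄ ≠ 0 := sub_ne_zero.2 h₄1.symm
  have : 1 - t₁ * t₂ ≠ 0 := sub_ne_zero.2 h₁₂.symm
  have : 1 - t₁ * t₄ ≠ 0 := sub_ne_zero.2 h₁₄.symm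
  have : 1 - t₂ * t₃ ≠ 0 := sub_ne_zero.2 h₂₃.symm
  have hu₁0 : u₁ ≠ 0 := hu₁ ▸ shapePrime_mul_shapePrimePrime_ne_zero h₁ h₄0 h₄1
  have hu₃0 : u₃ ≠ 0 := hu₃ ▸ shapePrime_mul_shapePrimePrime_ne_zero h₃ h₂0 h₂1
  have hP : 1 - u₁ * u₃ = (1 - t₁ * t₂) * (1 - t₂ * t₃) / ((1 - t₁) * (1 - t₃) * t₂) := by
    rw [hu₁, hu₃]; exact one_sub_shape_mul_shape hprod h₁ h₂0 h₃ h₄0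
  rw [shapePrime_one_div (mul_ne_zero hu₁0 hu₃0), ← neg_sub, hP, hu₁, hu₂, hu₃,
    shapePrimePrime_shapePrime_mul t₁ h₄0 h₄1, shapePrimePrime_shapePrime_mul t₁ h₂0 h₂1,
    shapePrime_mul_shapePrimePrime t₁ h₄0, shapePrime_mul_shapePrimePrime t₃ h₂0]
  field_simp
  linear_combination (t₄ - 1) * (1 - t₂) * hprod

theorem four_five_inverse_t₂ {t₁ t₂ t₃ t₄ u₁ u₂ u₃ : K} (hprod : t₁ * t₂ * t₃ * t₄ = 1)
    (h₁ : t₁ ≠ 1) (h₂0 : t₂ ≠ 0) (h₂1 : t₂ ≠ 1) (h₃ : t₃ ≠ 1) (h₄0 : t₄ ≠ 0)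
    (hu₁ : u₁ = shapePrime t₁ * shapePrimePrime t₄) (hu₂ : u₂ = shapePrime t₁ * shapePrimePrime t₂)
    (hu₃ : u₃ = shapePrime t₃ * shapePrimePrime t₂) (hu₂1 : u₂ ≠ 1) (hu₃1 : u₃ ≠ 1) :
    t₂ = shapePrime u₂ * shapePrime u₃ * shapePrimePrime (1 / (u₁ * u₃)) := by
  have h₁₂ := mul_ne_one_of_shapePrime_mul_shapePrimePrime_ne_one h₂0 h₂1 (hu₂ ▸ hu₂1)
  have h₃₂ := mul_ne_one_of_shapePrime_mul_shapePrimePrime_ne_one h₂0 h₂1 (hu₃ ▸ hu₃1)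
  have : 1 - t₂ * t₁ ≠ 0 := by rw [mul_comm]; exact sub_ne_zero.2 h₁₂.symm
  have : 1 - t₂ * t₃ ≠ 0 := by rw [mul_comm]; exact sub_ne_zero.2 h₃₂.symm
  have : 1 - t₁ ≠ 0 := sub_ne_zero.2 h₁.symm
  have : 1 - t₃ ≠ 0 := sub_ne_zero.2 h₃.symm
  rw [shapePrimePrime_one_div, hu₁, hu₃, one_sub_shape_mul_shape hprod h₁ h₂0 h₃ h₄0, hu₂,
    shapePrime_shapePrime_mul h₁ h₂0, shapePrime_shapePrime_mul h₃ h₂0]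
  field_simp

end

theorem four_five_inverse_general (t₁ t₂ t₃ t₄ u₁ u₂ u₃ u₄ u₅ : ℂ)
    (h₁1 : t₁ ≠ 1) (h₂0 : t₂ ≠ 0) (h₂1 : t₂ ≠ 1)
    (h₃1 : t₃ ≠ 1) (h₄0 : t₄ ≠ 0) (h₄1 : t₄ ≠ 1)
    (hprod : t₁ * t₂ * t₃ * t₄ = 1)
    (hu₁ : u₁ = (1 / (1 - t₁)) * (1 - 1 / t₄))
    (hu₂ : u₂ = (1 / (1 - t₁)) * (1 - 1 / t₂))
    (hu₃ : u₃ = (1 / (1 - t₃)) * (1 - 1 / t₂))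
    (hu₄ : u₄ = (1 / (1 - t₃)) * (1 - 1 / t₄))
    (hu₅ : u₅ = 1 / (u₁ * u₃))
    (hu₁1 : u₁ ≠ 1) (hu₂1 : u₂ ≠ 1)
    (hu₃1 : u₃ ≠ 1) (hu₄1 : u₄ ≠ 1) :
    t₁ = (1 - 1 / u₁) * (1 - 1 / u₂) * (1 / (1 - u₅)) ∧
    t₂ = (1 / (1 - u₂)) * (1 / (1 - u₃)) * (1 - 1 / u₅) ∧
    t₃ = (1 - 1 / u₃) * (1 - 1 / u₄) * (1 / (1 - u₅)) ∧
    t₄ = (1 / (1 - u₄)) * (1 / (1 - u₁)) * (1 - 1 / u₅) := by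
  have hprod' : t₃ * t₄ * t₁ * t₂ = 1 := by rw [← hprod]; ring
  have hu₅' : u₅ = 1 / (u₃ * u₁) := by rw [hu₅, mul_comm]
  exact ⟨hu₅ ▸ four_five_inverse_t₁ hprod h₁1 h₂0 h₂1 h₃1 h₄0 h₄1 hu₁ hu₂ hu₃ hu₁1 hu₂1,
    hu₅ ▸ four_five_inverse_t₂ hprod h₁1 h₂0 h₂1 h₃1 h₄0 hu₁ hu₂ hu₃ hu₂1 hu₃1,
    hu₅' ▸ four_five_inverse_t₁ hprod' h₃1 h₄0 h₄1 h₁1 h₂0 h₂1 hu₃ hu₄ hu₁ hu₃1 hu₄1,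
    hu₅' ▸ four_five_inverse_t₂ hprod' h₃1 h₄0 h₄1 h₁1 h₂0 hu₃ hu₄ hu₁ hu₄1 hu₁1⟩

/-- Inverse relations of the shape parameters under the 4-5 move. -/
theorem four_five_inverse (t₁ t₂ t₃ t₄ u₁ u₂ u₃ u₄ u₅ : ℂ)
    (h₁0 : t₁ ≠ 0) (h₁1 : t₁ ≠ 1) (h₂0 : t₂ ≠ 0) (h₂1 : t₂ ≠ 1)
    (h₃0 : t₃ ≠ 0) (h₃1 : t₃ ≠ 1) (h₄0 : t₄ ≠ 0) (h₄1 : t₄ ≠ 1)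
    (hprod : t₁ * t₂ * t₃ * t₄ = 1)
    (hu₁ : u₁ = (1 / (1 - t₁)) * (1 - 1 / t₄))
    (hu₂ : u₂ = (1 / (1 - t₁)) * (1 - 1 / t₂))
    (hu₃ : u₃ = (1 / (1 - t₃)) * (1 - 1 / t₂))
    (hu₄ : u₄ = (1 / (1 - t₃)) * (1 - 1 / t₄))
    (hu₅ : u₅ = 1 / (u₁ * u₃))
    (hu₁0 : u₁ ≠ 0) (hu₁1 : u₁ ≠ 1) (hu₂0 : u₂ ≠ 0) (hu₂1 : u₂ ≠ 1)
    (hu₃0 : u₃ ≠ 0) (hu₃1 : u₃ ≠ 1) (hu₄0 : u₄ ≠ 0) (hu₄1 : u₄ ≠ 1)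
    (hu₅0 : u₅ ≠ 0) (hu₅1 : u₅ ≠ 1) :
    t₁ = (1 - 1 / u₁) * (1 - 1 / u₂) * (1 / (1 - u₅)) ∧
    t₂ = (1 / (1 - u₂)) * (1 / (1 - u₃)) * (1 - 1 / u₅) ∧
    t₃ = (1 - 1 / u₃) * (1 - 1 / u₄) * (1 / (1 - u₅)) ∧
    t₄ = (1 / (1 - u₄)) * (1 / (1 - u₁)) * (1 - 1 / u₅) :=
  four_five_inverse_general t₁ t₂ t₃ t₄ u₁ u₂ u₃ u₄ u₅ h₁1 h₂0 h₂1 h₃1 h₄0 h₄1 hprod hu₁ hu₂ hu₃ hu₄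
    hu₅ hu₁1 hu₂1 hu₃1 hu₄1
end

section
/- Let t₁, t₂, t₄ ∈ ℂ \ {0,1} satisfy t₁t₂t₄ = 1 and set u₁ = t₁'t₄'', u₂ = t₁'t₂'' (where x' = 1/(1-x), x'' = 1-1/x), assumed not in {0,1}. Then t₁ = u₁''u₂'', t₂ = u₁u₂', and t₄ = u₁'u₂. -/
open Complex

/-!
Eliminating `t₄ = (t₁ t₂)⁻¹` turns the definitions into `u₁ = (1 - t₁ t₂) / (1 - t₁)` and
`u₂ = (t₂ - 1) / ((1 - t₁) t₂)`, whence `1 - u₁ = t₁ (t₂ - 1) / (1 - t₁)` and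
`1 - u₂ = (1 - t₁ t₂) / ((1 - t₁) t₂)`. In these four rational functions of `t₁, t₂` the three
claimed identities are plain cancellations, valid once `t₁, t₂ ≠ 0` and `t₁, t₂, t₁ t₂ ≠ 1`.
-/

section ThreeTwoMove

variable {K : Type*} [Field K] {t₁ t₂ u₁ u₂ : K}

theorem one_sub_eq_of_eq_one_sub_mul_div (h₁ : t₁ ≠ 1) (hu₁ : u₁ = (1 - t₁ * t₂) / (1 - t₁)) :
    1 - u₁ = t₁ * (t₂ - 1) / (1 - t₁) := by
  rw [hu₁]
  field_simp
  ring

theorem one_sub_eq_of_eq_sub_one_div (h₁ : t₁ ≠ 1) (h₂ : t₂ ≠ 0)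
    (hu₂ : u₂ = (t₂ - 1) / ((1 - t₁) * t₂)) :
    1 - u₂ = (1 - t₁ * t₂) / ((1 - t₁) * t₂) := by
  rw [hu₂]
  field_simp
  ring

theorem eq_one_sub_one_div_mul_one_sub_one_div (h₂0 : t₂ ≠ 0) (h₁ : t₁ ≠ 1) (h₂ : t₂ ≠ 1)
    (h₁₂ : t₁ * t₂ ≠ 1) (hu₁ : u₁ = (1 - t₁ * t₂) / (1 - t₁))
    (hu₂ : u₂ = (t₂ - 1) / ((1 - t₁) * t₂)) :
    t₁ = (1 - 1 / u₁) * (1 - 1 / u₂) := by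
  have hu₁0 : u₁ ≠ 0 := hu₁ ▸ div_ne_zero (sub_ne_zero.mpr h₁₂.symm) (sub_ne_zero.mpr h₁.symm)
  have hu₂0 : u₂ ≠ 0 :=
    hu₂ ▸ div_ne_zero (sub_ne_zero.mpr h₂) (mul_ne_zero (sub_ne_zero.mpr h₁.symm) h₂0)
  calc t₁ = (1 - u₁) * (1 - u₂) / (u₁ * u₂) := by
        rw [one_sub_eq_of_eq_one_sub_mul_div h₁ hu₁, one_sub_eq_of_eq_sub_one_div h₁ h₂0 hu₂,
          hu₁, hu₂]
        field_simp
    _ = (1 - 1 / u₁) * (1 - 1 / u₂) := by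
        field_simp
        ring

theorem eq_mul_one_div_one_sub (h₂0 : t₂ ≠ 0) (h₁ : t₁ ≠ 1) (h₁₂ : t₁ * t₂ ≠ 1)
    (hu₁ : u₁ = (1 - t₁ * t₂) / (1 - t₁)) (hu₂ : u₂ = (t₂ - 1) / ((1 - t₁) * t₂)) :
    t₂ = u₁ * (1 / (1 - u₂)) := by
  have h₁₂' : 1 - t₁ * t₂ ≠ 0 := sub_ne_zero.mpr h₁₂.symm
  rw [one_sub_eq_of_eq_sub_one_div h₁ h₂0 hu₂, hu₁]
  field_simp
  rw [mul_comm t₂, div_self h₁₂']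

theorem inv_mul_eq_one_div_one_sub_mul (h₁0 : t₁ ≠ 0) (h₂0 : t₂ ≠ 0) (h₁ : t₁ ≠ 1)
    (h₂ : t₂ ≠ 1) (hu₁ : u₁ = (1 - t₁ * t₂) / (1 - t₁))
    (hu₂ : u₂ = (t₂ - 1) / ((1 - t₁) * t₂)) :
    (t₁ * t₂)⁻¹ = (1 / (1 - u₁)) * u₂ := by
  rw [one_sub_eq_of_eq_one_sub_mul_div h₁ hu₁, hu₂]
  field_simp

end ThreeTwoMove

theorem three_two_inverse_general (t₁ t₂ t₄ u₁ u₂ : ℂ)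
    (h₁0 : t₁ ≠ 0) (h₁1 : t₁ ≠ 1) (h₂0 : t₂ ≠ 0) (h₂1 : t₂ ≠ 1)
    (h₄1 : t₄ ≠ 1)
    (hprod : t₁ * t₂ * t₄ = 1)
    (hu₁ : u₁ = (1 / (1 - t₁)) * (1 - 1 / t₄))
    (hu₂ : u₂ = (1 / (1 - t₁)) * (1 - 1 / t₂)) :
    t₁ = (1 - 1 / u₁) * (1 - 1 / u₂) ∧
    t₂ = u₁ * (1 / (1 - u₂)) ∧
    t₄ = (1 / (1 - u₁)) * u₂ := by
  have ht₄ : t₄ = (t₁ * t₂)⁻¹ := eq_inv_of_mul_eq_one_right hprod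
  have h₁₂ : t₁ * t₂ ≠ 1 := fun h ↦ h₄1 (by rw [ht₄, h, inv_one])
  have e₁ : u₁ = (1 - t₁ * t₂) / (1 - t₁) := by
    rw [hu₁, ht₄, one_div (t₁ * t₂)⁻¹, inv_inv, one_div_mul_eq_div]
  have e₂ : u₂ = (t₂ - 1) / ((1 - t₁) * t₂) := by
    rw [hu₂]
    field_simp
  exact ⟨eq_one_sub_one_div_mul_one_sub_one_div h₂0 h₁1 h₂1 h₁₂ e₁ e₂,
    eq_mul_one_div_one_sub h₂0 h₁1 h₁₂ e₁ e₂,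
    ht₄ ▸ inv_mul_eq_one_div_one_sub_mul h₁0 h₂0 h₁1 h₂1 e₁ e₂⟩

/-- Shape-parameter correspondence under the 3-2 move. -/
theorem three_two_inverse (t₁ t₂ t₄ u₁ u₂ : ℂ)
    (h₁0 : t₁ ≠ 0) (h₁1 : t₁ ≠ 1) (h₂0 : t₂ ≠ 0) (h₂1 : t₂ ≠ 1)
    (h₄0 : t₄ ≠ 0) (h₄1 : t₄ ≠ 1)
    (hprod : t₁ * t₂ * t₄ = 1)
    (hu₁ : u₁ = (1 / (1 - t₁)) * (1 - 1 / t₄))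
    (hu₂ : u₂ = (1 / (1 - t₁)) * (1 - 1 / t₂))
    (hu₁0 : u₁ ≠ 0) (hu₁1 : u₁ ≠ 1) (hu₂0 : u₂ ≠ 0) (hu₂1 : u₂ ≠ 1) :
    t₁ = (1 - 1 / u₁) * (1 - 1 / u₂) ∧
    t₂ = u₁ * (1 / (1 - u₂)) ∧
    t₄ = (1 / (1 - u₁)) * u₂ :=
  three_two_inverse_general t₁ t₂ t₄ u₁ u₂ h₁0 h₁1 h₂0 h₂1 h₄1 hprod hu₁ hu₂
end
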